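/- Let r ≥ 2 be an integer and let G be a finite cograph that is r-gap-free. Then the simplicial complex Σ_r(G) is vertex decomposable. -/

import Mathlib

open Finset

variable {V : Type*} [Fintype V] [DecidableEq V]

/-- The induced subgraph of `G` on the finset `s` is connected. -/
def ConnOn (G : SimpleGraph V) (s : Finset V) : Prop :=
  (G.induce (s : Set V)).Connected

/-- `Supp_r(A, G)` relative to the ground (vertex) set `U`:
all `F ⊆ U` with `|F| = r`, `F ∩ A = ∅` and `G[F ∪ A]` connected. -/
def Supp (G : SimpleGraph V) (U A : Finset V) (r : ℕ) : Set (Finset V) :=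
  {F | F ⊆ U ∧ F.card = r ∧ F ∩ A = ∅ ∧ ConnOn G (F ∪ A)}

/-- The `r`-co-connected complex `Σ_r(A, G)` on ground set `U`: faces are all subsets of
sets of the form `(U \ F) \ A` with `F ∈ Supp_r(A, G)`. -/
def SigmaC (G : SimpleGraph V) (U A : Finset V) (r : ℕ) : Set (Finset V) :=
  {H | ∃ F ∈ Supp G U A r, H ⊆ (U \ F) \ A}

/-- The circuit set of the `r`-connected clutter `Con_r(G)` on ground set `U`. -/
def ConR (G : SimpleGraph V) (U : Finset V) (r : ℕ) : Set (Finset V) :=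
  {W | W ⊆ U ∧ W.card = r ∧ ConnOn G W}

/-- `Σ_r(G)`: faces are all subsets of sets of the form `U \ W`, `W ∈ Con_r(G)`. -/
def SigmaG (G : SimpleGraph V) (U : Finset V) (r : ℕ) : Set (Finset V) :=
  {H | ∃ W ∈ ConR G U r, H ⊆ U \ W}

/-- Deletion of a vertex in a simplicial complex. -/
def delC (Δ : Set (Finset V)) (x : V) : Set (Finset V) :=
  {H | H ∈ Δ ∧ x ∉ H}

/-- Link of a vertex in a simplicial complex. -/
def linkC (Δ : Set (Finset V)) (x : V) : Set (Finset V) :=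
  {H | H ∈ Δ ∧ x ∉ H ∧ insert x H ∈ Δ}

/-- A facet is a maximal face. -/
def IsFacet (Δ : Set (Finset V)) (F : Finset V) : Prop :=
  F ∈ Δ ∧ ∀ H ∈ Δ, F ⊆ H → F = H

/-- `x` is a shedding vertex: every facet of `del_Δ(x)` is a facet of `Δ`. -/
def IsShedding (Δ : Set (Finset V)) (x : V) : Prop :=
  ∀ F, IsFacet (delC Δ x) F → IsFacet Δ F

/-- Vertex decomposability of a simplicial complex (the void complex, the empty complex and
simplices are vertex decomposable; otherwise one needs a shedding vertex whose link and
deletion are vertex decomposable). -/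
inductive VD {V : Type*} [DecidableEq V] : Set (Finset V) → Prop
  | simplex (s : Finset V) : VD {t | t ⊆ s}
  | void : VD (∅ : Set (Finset V))
  | step (Δ : Set (Finset V)) (x : V) (hx : {x} ∈ Δ) (hshed : IsShedding Δ x)
      (hlink : VD (linkC Δ x)) (hdel : VD (delC Δ x)) : VD Δ

/-- `G` is `r`-gap-free: no two disjoint circuits `E₁, E₂` of `Con_r(G)` such that `E₁, E₂`
are the only circuits of `Con_r(G)` contained in `E₁ ∪ E₂`. -/
def RGapFree {V : Type*} [Fintype V] [DecidableEq V] (G : SimpleGraph V) (r : ℕ) : Prop :=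
  ¬ ∃ E₁ E₂ : Finset V, E₁ ∈ ConR G Finset.univ r ∧ E₂ ∈ ConR G Finset.univ r ∧
      Disjoint E₁ E₂ ∧
      ∀ W ∈ ConR G Finset.univ r, W ⊆ E₁ ∪ E₂ → W = E₁ ∨ W = E₂

/-- The join of two graphs on the sum type: all edges of `G` and `H`, together with all
edges between the two sides. -/
def joinSum {α β : Type} (G : SimpleGraph α) (H : SimpleGraph β) : SimpleGraph (α ⊕ β) :=
  SimpleGraph.fromRel (fun x y =>
    match x, y with
    | Sum.inl a, Sum.inl b => G.Adj a b
    | Sum.inr a, Sum.inr b => H.Adj a b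
    | Sum.inl _, Sum.inr _ => True
    | Sum.inr _, Sum.inl _ => False)

/-- Cographs: the smallest class of finite simple graphs containing the one-vertex graph
and closed under disjoint union, join, and graph isomorphism. -/
inductive IsCograph : {α : Type} → SimpleGraph α → Prop
  | single : IsCograph (⊥ : SimpleGraph PUnit)
  | disjUnion {α β : Type} {G : SimpleGraph α} {H : SimpleGraph β} :
      IsCograph G → IsCograph H → IsCograph (G ⊕g H)
  | join {α β : Type} {G : SimpleGraph α} {H : SimpleGraph β} :
      IsCograph G → IsCograph H → IsCograph (joinSum G H)
  | iso {α β : Type} {G : SimpleGraph α} {H : SimpleGraph β} :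
      IsCograph G → (G ≃g H) → IsCograph H

set_option linter.unusedSectionVars false

section Reach

variable {V : Type} [Fintype V] [DecidableEq V]

/-- One adjacency step inside the finset `S`. -/
def StepR (G : SimpleGraph V) (S : Finset V) (u v : V) : Prop :=
  u ∈ S ∧ v ∈ S ∧ G.Adj u v

/-- Reachability inside the finset `S`. -/
def ReachIn (G : SimpleGraph V) (S : Finset V) : V → V → Prop :=
  Relation.ReflTransGen (StepR G S)

lemma reachIn_mono {G : SimpleGraph V} {S T : Finset V} (hST : S ⊆ T) {a b : V}
    (h : ReachIn G S a b) : ReachIn G T a b := by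
  refine Relation.ReflTransGen.mono ?_ _ _ h
  rintro u v ⟨hu, hv, hadj⟩
  exact ⟨hST hu, hST hv, hadj⟩

lemma reachIn_symm {G : SimpleGraph V} {S : Finset V} {a b : V}
    (h : ReachIn G S a b) : ReachIn G S b a := by
  induction h with
  | refl => exact Relation.ReflTransGen.refl
  | tail h1 h2 ih =>
      exact Relation.ReflTransGen.head ⟨h2.2.1, h2.1, h2.2.2.symm⟩ ih

lemma connOn_iff {G : SimpleGraph V} {S : Finset V} :
    ConnOn G S ↔ S.Nonempty ∧ ∀ a ∈ S, ∀ b ∈ S, ReachIn G S a b := by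
  rw [ConnOn, SimpleGraph.connected_iff]
  constructor
  · rintro ⟨hpre, hne⟩
    obtain ⟨⟨a, ha⟩⟩ := hne
    refine ⟨⟨a, by simpa using ha⟩, ?_⟩
    intro a ha b hb
    obtain ⟨w⟩ := hpre ⟨a, by simpa using ha⟩ ⟨b, by simpa using hb⟩
    clear hpre
    generalize hx : (⟨a, by simpa using ha⟩ : (S : Set V)) = x at w
    have : ∀ (u v : (S : Set V)), (G.induce (S : Set V)).Walk u v → ReachIn G S u v := by
      intro u v w
      induction w with
      | nil => exact Relation.ReflTransGen.refl
      | cons h p ih =>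
          rename_i x y z
          exact Relation.ReflTransGen.head ⟨x.2, y.2, h⟩ ih
    have := this _ _ w
    subst hx
    simpa using this
  · rintro ⟨⟨a, ha⟩, h⟩
    refine ⟨?_, ⟨⟨a, by simpa using ha⟩⟩⟩
    · rintro ⟨u, hu⟩ ⟨v, hv⟩
      have hr := h u (by simpa using hu) v (by simpa using hv)
      have : ∀ (v : V) (hv : v ∈ S), ReachIn G S u v →
          (G.induce (S : Set V)).Reachable ⟨u, hu⟩ ⟨v, by simpa using hv⟩ := by
        intro v hv hr
        induction hr with
        | refl => exact SimpleGraph.Reachable.refl _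
        | tail h1 h2 ih =>
            rename_i b c _
            refine SimpleGraph.Reachable.trans (ih h2.1) ?_
            exact SimpleGraph.Adj.reachable (by exact h2.2.2)
      exact this v (by simpa using hv) hr

end Reach
section Basics

variable {V : Type} [Fintype V] [DecidableEq V] {G : SimpleGraph V}

/-- Escape lemma: a reachability chain from inside `X` to outside `X` must use an edge
leaving `X`. -/
lemma reachIn_escape {S : Finset V} {X : Set V} {a b : V} (ha : a ∈ X)
    (h : ReachIn G S a b) (hb : b ∉ X) :
    ∃ z z', z ∈ X ∧ z' ∉ X ∧ z ∈ S ∧ z' ∈ S ∧ G.Adj z z' := by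
  induction h with
  | refl => exact absurd ha hb
  | tail h1 h2 ih =>
      rename_i c d
      by_cases hc : c ∈ X
      · exact ⟨c, d, hc, hb, h2.1, h2.2.1, h2.2.2⟩
      · exact ih hc

/-- A closed-set lemma: if `X` is closed under steps in `S`, reachability stays in `X`. -/
lemma reachIn_closed {S : Finset V} {X : Set V} {a b : V} (ha : a ∈ X)
    (hcl : ∀ z z', z ∈ X → z ∈ S → z' ∈ S → G.Adj z z' → z' ∈ X)
    (h : ReachIn G S a b) : b ∈ X := by
  induction h with
  | refl => exact ha
  | tail h1 h2 ih => exact hcl _ _ ih h2.1 h2.2.1 h2.2.2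

lemma connOn_singleton (G : SimpleGraph V) (x : V) : ConnOn G ({x} : Finset V) := by
  rw [connOn_iff]
  refine ⟨⟨x, mem_singleton_self x⟩, ?_⟩
  intro a ha b hb
  rw [mem_singleton] at ha hb
  subst ha; subst hb
  exact Relation.ReflTransGen.refl

lemma adj_of_connOn_pair {a b : V} (hab : a ≠ b) (h : ConnOn G ({a, b} : Finset V)) :
    G.Adj a b := by
  rw [connOn_iff] at h
  have hr := h.2 a (by simp) b (by simp)
  obtain ⟨z, z', hz, hz', hzS, hz'S, hadj⟩ :=
    reachIn_escape (X := {a}) rfl hr (by simpa using hab.symm)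
  rw [Set.mem_singleton_iff] at hz
  subst hz
  have : z' = b := by
    rcases mem_insert.mp hz'S with h1 | h1
    · exact absurd h1 (by simpa using hz')
    · exact mem_singleton.mp h1
  subst this
  exact hadj

/-- Any nonempty subset of `T₁ ∪ T₂` meeting both sides of a complete join is connected. -/
lemma connOn_of_mixed {T₁ T₂ S : Finset V}
    (hAB : ∀ a ∈ T₁, ∀ b ∈ T₂, G.Adj a b) (hS : S ⊆ T₁ ∪ T₂)
    (h1 : ∃ p ∈ S, p ∈ T₁) (h2 : ∃ q ∈ S, q ∈ T₂) : ConnOn G S := by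
  obtain ⟨p, hpS, hp⟩ := h1
  obtain ⟨q, hqS, hq⟩ := h2
  rw [connOn_iff]
  refine ⟨⟨p, hpS⟩, ?_⟩
  have key : ∀ a ∈ S, ReachIn G S a q := by
    intro a ha
    rcases mem_union.mp (hS ha) with h | h
    · exact Relation.ReflTransGen.single ⟨ha, hqS, hAB a h q hq⟩
    · by_cases haq : a = q
      · subst haq; exact Relation.ReflTransGen.refl
      · exact Relation.ReflTransGen.head ⟨ha, hpS, (hAB p hp a h).symm⟩
          (Relation.ReflTransGen.single ⟨hpS, hqS, hAB p hp q hq⟩)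
  intro a ha b hb
  exact (key a ha).trans (reachIn_symm (key b hb))

/-- A disconnected nonempty induced subgraph splits into two nonempty parts with no
edges in between. -/
lemma split_of_not_connOn {S : Finset V} (hne : S.Nonempty) (h : ¬ ConnOn G S) :
    ∃ D₁ D₂ : Finset V, D₁ ∪ D₂ = S ∧ Disjoint D₁ D₂ ∧ D₁.Nonempty ∧ D₂.Nonempty ∧
      ∀ a ∈ D₁, ∀ b ∈ D₂, ¬ G.Adj a b := by
  classical
  obtain ⟨a, ha⟩ := hne
  set D₁ : Finset V := S.filter (fun u => ReachIn G S a u) with hD₁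
  set D₂ : Finset V := S.filter (fun u => ¬ ReachIn G S a u) with hD₂
  have hmem₁ : ∀ u, u ∈ D₁ ↔ u ∈ S ∧ ReachIn G S a u := by
    intro u; simp [hD₁]
  have hmem₂ : ∀ u, u ∈ D₂ ↔ u ∈ S ∧ ¬ ReachIn G S a u := by
    intro u; simp [hD₂]
  refine ⟨D₁, D₂, ?_, ?_, ⟨a, (hmem₁ a).mpr ⟨ha, Relation.ReflTransGen.refl⟩⟩, ?_, ?_⟩
  · ext u
    simp only [mem_union, hmem₁, hmem₂]
    constructor
    · rintro (⟨h1, _⟩ | ⟨h1, _⟩) <;> exact h1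
    · intro hu; by_cases hru : ReachIn G S a u
      · exact Or.inl ⟨hu, hru⟩
      · exact Or.inr ⟨hu, hru⟩
  · rw [Finset.disjoint_left]
    intro u h1 h2
    exact ((hmem₂ u).mp h2).2 ((hmem₁ u).mp h1).2
  · by_contra hD2
    apply h
    rw [connOn_iff]
    push_neg at hD2
    refine ⟨⟨a, ha⟩, ?_⟩
    have hall : ∀ u ∈ S, ReachIn G S a u := by
      intro u hu
      by_contra hru
      have : u ∈ D₂ := (hmem₂ u).mpr ⟨hu, hru⟩
      simp [hD2] at this
    intro u hu v hv
    exact (reachIn_symm (hall u hu)).trans (hall v hv)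
  · intro u h1 v h2 hadj
    have := (hmem₁ u).mp h1
    exact ((hmem₂ v).mp h2).2 (this.2.tail ⟨this.1, ((hmem₂ v).mp h2).1, hadj⟩)

end Basics
/-- `G` has no induced path on four vertices. -/
def P4Free {α : Type} (G : SimpleGraph α) : Prop :=
  ∀ a b c d : α, G.Adj a b → G.Adj b c → G.Adj c d →
    ¬ G.Adj a c → ¬ G.Adj a d → ¬ G.Adj b d → False

section Seinsche

variable {V : Type} [Fintype V] [DecidableEq V] {G : SimpleGraph V}

lemma exists_neighbor_of_connOn {S : Finset V} (hconn : ConnOn G S) {v u : V}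
    (hv : v ∈ S) (hu : u ∈ S) (hne : u ≠ v) : ∃ w ∈ S, G.Adj v w := by
  rw [connOn_iff] at hconn
  obtain ⟨z, z', hz, hz', hzS, hz'S, hadj⟩ :=
    reachIn_escape (X := {v}) rfl (hconn.2 v hv u hu) (by simpa using hne)
  rw [Set.mem_singleton_iff] at hz
  subst hz
  exact ⟨z', hz'S, hadj⟩

lemma seinsche_aux (hP4 : P4Free G) :
    ∀ n (S : Finset V), S.card = n → 2 ≤ S.card → ConnOn G S →
    ∃ T₁ T₂ : Finset V, T₁ ∪ T₂ = S ∧ Disjoint T₁ T₂ ∧ T₁.Nonempty ∧ T₂.Nonempty ∧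
      ∀ a ∈ T₁, ∀ b ∈ T₂, G.Adj a b := by
  intro n
  induction n using Nat.strong_induction_on with
  | _ n ih =>
  rintro S rfl hcard hconn
  classical
  rcases eq_or_lt_of_le hcard with h2 | h3
  · -- base case : |S| = 2
    obtain ⟨a, b, hab, rfl⟩ := Finset.card_eq_two.mp h2.symm
    have hadj : G.Adj a b := adj_of_connOn_pair hab hconn
    refine ⟨{a}, {b}, rfl, by simpa using hab, ⟨a, by simp⟩, ⟨b, by simp⟩, ?_⟩
    intro x hx y hy
    rw [mem_singleton] at hx hy; subst hx; subst hy; exact hadj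
  · -- |S| ≥ 3
    obtain ⟨v, hv⟩ := (Finset.card_pos (s := S)).mp (by omega)
    set S' := S.erase v with hS'
    have hS'card : S'.card = S.card - 1 := Finset.card_erase_of_mem hv
    have hS'sub : S' ⊆ S := Finset.erase_subset _ _
    have hinsert : insert v S' = S := Finset.insert_erase hv
    have hvS' : v ∉ S' := Finset.notMem_erase _ _
    -- v has a neighbor in S'
    obtain ⟨u₀, hu₀S, hu₀ne⟩ : ∃ u ∈ S, u ≠ v := by
      by_contra hno
      push_neg at hno
      have : S ⊆ {v} := fun x hx => mem_singleton.mpr (hno x hx)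
      have := Finset.card_le_card this
      simp at this; omega
    obtain ⟨w₀, hw₀S, hw₀adj⟩ := exists_neighbor_of_connOn hconn hv hu₀S hu₀ne
    have hw₀S' : w₀ ∈ S' := Finset.mem_erase.mpr ⟨fun h => by subst h; exact G.irrefl hw₀adj, hw₀S⟩
    by_cases hc : ConnOn G S'
    · -- Case B : S' connected, use IH
      obtain ⟨A, B, hABU, hABd, hAne, hBne, hAB⟩ :=
        ih (S.card - 1) (by omega) S' hS'card (by omega) hc
      set A₀ := A.filter (fun u => ¬ G.Adj v u) with hA₀
      set B₀ := B.filter (fun u => ¬ G.Adj v u) with hB₀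
      have hAS' : A ⊆ S' := hABU ▸ Finset.subset_union_left
      have hBS' : B ⊆ S' := hABU ▸ Finset.subset_union_right
      by_cases hA₀e : A₀ = ∅
      · -- v adjacent to all of A
        have hvA : ∀ a ∈ A, G.Adj v a := by
          intro a haA
          by_contra hna
          have : a ∈ A₀ := by rw [hA₀, mem_filter]; exact ⟨haA, hna⟩
          simp [hA₀e] at this
        refine ⟨A, insert v B, ?_, ?_, hAne, ⟨v, mem_insert_self _ _⟩, ?_⟩
        · rw [Finset.union_insert, ← hinsert, hABU]
        · rw [Finset.disjoint_insert_right]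
          exact ⟨fun h => hvS' (hAS' h), hABd⟩
        · intro a ha b hb
          rcases mem_insert.mp hb with rfl | hb
          · exact (hvA a ha).symm
          · exact hAB a ha b hb
      · by_cases hB₀e : B₀ = ∅
        · have hvB : ∀ b ∈ B, G.Adj v b := by
            intro b hbB
            by_contra hnb
            have : b ∈ B₀ := by rw [hB₀, mem_filter]; exact ⟨hbB, hnb⟩
            simp [hB₀e] at this
          refine ⟨insert v A, B, ?_, ?_, ⟨v, mem_insert_self _ _⟩, hBne, ?_⟩
          · rw [Finset.insert_union, ← hinsert, hABU]
          · rw [Finset.disjoint_insert_left]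
            exact ⟨fun h => hvS' (hBS' h), hABd⟩
          · intro a ha b hb
            rcases mem_insert.mp ha with rfl | ha
            · exact hvB b hb
            · exact hAB a ha b hb
        · -- both A₀ and B₀ nonempty
          obtain ⟨a₀, ha₀⟩ := Finset.nonempty_of_ne_empty hA₀e
          obtain ⟨b₀, hb₀⟩ := Finset.nonempty_of_ne_empty hB₀e
          rw [hA₀, mem_filter] at ha₀
          rw [hB₀, mem_filter] at hb₀
          have claim1 : ∀ w ∈ A, G.Adj v w → ∀ a ∈ A₀, G.Adj w a := by
            intro w hwA hvw a haA₀
            rw [hA₀, mem_filter] at haA₀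
            by_contra hwa
            exact hP4 v w b₀ a hvw (hAB w hwA b₀ hb₀.1) ((hAB a haA₀.1 b₀ hb₀.1).symm)
              hb₀.2 haA₀.2 hwa
          have claim2 : ∀ w ∈ B, G.Adj v w → ∀ b ∈ B₀, G.Adj w b := by
            intro w hwB hvw b hbB₀
            rw [hB₀, mem_filter] at hbB₀
            by_contra hwb
            exact hP4 v w a₀ b hvw ((hAB a₀ ha₀.1 w hwB).symm) (hAB a₀ ha₀.1 b hbB₀.1)
              ha₀.2 hbB₀.2 hwb
          refine ⟨insert v (A₀ ∪ B₀), (A.filter (fun u => G.Adj v u)) ∪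
            (B.filter (fun u => G.Adj v u)), ?_, ?_, ⟨v, mem_insert_self _ _⟩, ?_, ?_⟩
          · rw [← hinsert]
            rw [Finset.insert_union]
            congr 1
            ext x
            simp only [hA₀, hB₀, mem_union, mem_filter, ← hABU]
            tauto
          · rw [Finset.disjoint_insert_left]
            constructor
            · intro h
              rcases mem_union.mp h with h | h <;> rw [mem_filter] at h
              · exact hvS' (hAS' h.1)
              · exact hvS' (hBS' h.1)
            · rw [Finset.disjoint_left]
              intro x hx hx'
              rcases mem_union.mp hx with h | h <;> rw [mem_filter] at h <;>
                rcases mem_union.mp hx' with h' | h' <;> rw [mem_filter] at h'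
              · exact h.2 h'.2
              · exact Finset.disjoint_left.mp hABd h.1 h'.1
              · exact Finset.disjoint_left.mp hABd h'.1 h.1
              · exact h.2 h'.2
          · -- A₁ ∪ B₁ nonempty : w₀
            rcases mem_union.mp (hABU ▸ hw₀S') with h | h
            · exact ⟨w₀, mem_union_left _ (mem_filter.mpr ⟨h, hw₀adj⟩)⟩
            · exact ⟨w₀, mem_union_right _ (mem_filter.mpr ⟨h, hw₀adj⟩)⟩
          · intro x hx y hy
            have hyadj : G.Adj v y ∧ (y ∈ A ∨ y ∈ B) := by
              rcases mem_union.mp hy with h | h <;> rw [mem_filter] at h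
              · exact ⟨h.2, Or.inl h.1⟩
              · exact ⟨h.2, Or.inr h.1⟩
            rcases mem_insert.mp hx with rfl | hx
            · exact hyadj.1
            · rcases mem_union.mp hx with hxA | hxB
              · rcases hyadj.2 with hyA | hyB
                · exact (claim1 y hyA hyadj.1 x hxA).symm
                · have : x ∈ A := (mem_filter.mp (hA₀ ▸ hxA)).1
                  exact hAB x this y hyB
              · rcases hyadj.2 with hyA | hyB
                · have : x ∈ B := (mem_filter.mp (hB₀ ▸ hxB)).1
                  exact (hAB y hyA x this).symm
                · exact (claim2 y hyB hyadj.1 x hxB).symm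
    · -- Case A : S' disconnected, v is universal
      obtain ⟨D₁, D₂, hDU, hDd, hD₁ne, hD₂ne, hnoedge⟩ :=
        split_of_not_connOn (Finset.card_pos.mp (by omega)) hc
      have hD₁S' : D₁ ⊆ S' := hDU ▸ Finset.subset_union_left
      have hD₂S' : D₂ ⊆ S' := hDU ▸ Finset.subset_union_right
      have hnoedge' : ∀ a ∈ D₂, ∀ b ∈ D₁, ¬ G.Adj a b := by
        intro a ha b hb h
        exact hnoedge b hb a ha h.symm
      -- v adjacent into both sides
      have hvside : ∀ (E F : Finset V), E ∪ F = S' → Disjoint E F →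
          (∀ a ∈ E, ∀ b ∈ F, ¬ G.Adj a b) →
          F.Nonempty → ∃ z ∈ F, G.Adj v z := by
        intro E F hEF hEFd hEFn hFne
        by_contra hno
        push_neg at hno
        obtain ⟨d, hd⟩ := hFne
        rw [connOn_iff] at hconn
        have hreach := hconn.2 v hv d (hS'sub (hEF ▸ mem_union_right _ hd))
        have : d ∈ ({v} : Set V) ∪ ↑E := by
          refine reachIn_closed (Set.mem_union_left _ rfl) ?_ hreach
          intro z z' hz hzS hz'S hadj
          have hz'cases : z' = v ∨ z' ∈ E ∨ z' ∈ F := by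
            by_cases h : z' = v
            · exact Or.inl h
            · have : z' ∈ S' := Finset.mem_erase.mpr ⟨h, hz'S⟩
              rcases mem_union.mp (hEF ▸ this) with h | h
              · exact Or.inr (Or.inl h)
              · exact Or.inr (Or.inr h)
          rcases hz'cases with rfl | h | h
          · exact Set.mem_union_left _ rfl
          · exact Set.mem_union_right _ (by simpa using h)
          · exfalso
            rcases hz with hz | hz
            · rw [Set.mem_singleton_iff] at hz; subst hz
              exact hno z' h hadj
            · exact hEFn z (by simpa using hz) z' h hadj
        rcases this with h | h
        · rw [Set.mem_singleton_iff] at h; subst h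
          exact hvS' (hEF ▸ mem_union_right _ hd)
        · have hdE : d ∈ E := by simpa using h
          exact Finset.disjoint_left.mp hEFd hdE hd
      -- v is universal on S'
      have huniv : ∀ u ∈ S', G.Adj v u := by
        by_contra hno
        push_neg at hno
        obtain ⟨u, huS', hnu⟩ := hno
        rw [connOn_iff] at hconn
        obtain ⟨z, z', hzX, hz'X, hzS, hz'S, hadj⟩ := reachIn_escape
          (X := {v} ∪ {w | w ∈ S' ∧ G.Adj v w}) (Set.mem_union_left _ rfl)
          (hconn.2 v hv u (hS'sub huS'))
          (by
            intro h
            rcases h with h | h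
            · exact (Finset.mem_erase.mp huS').1 h
            · exact hnu h.2)
        have hz'v : z' ≠ v := by
          intro h; subst h
          exact hz'X (Set.mem_union_left _ rfl)
        have hz'S' : z' ∈ S' := Finset.mem_erase.mpr ⟨hz'v, hz'S⟩
        have hnz' : ¬ G.Adj v z' := fun h => hz'X (Set.mem_union_right _ ⟨hz'S', h⟩)
        rcases hzX with hzv | hzP
        · rw [Set.mem_singleton_iff] at hzv; subst hzv
          exact hnz' hadj
        · obtain ⟨hzS', hvz⟩ := hzP
          have key : ∀ (E F : Finset V), E ∪ F = S' → Disjoint E F →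
              (∀ a ∈ E, ∀ b ∈ F, ¬ G.Adj a b) → F.Nonempty → z ∈ E → False := by
            intro E F hEF hEFd hEFn hFne hzE
            have hz'E : z' ∈ E := by
              rcases mem_union.mp (hEF ▸ hz'S') with h | h
              · exact h
              · exact absurd hadj (hEFn z hzE z' h)
            obtain ⟨z₂, hz₂F, hvz₂⟩ := hvside E F hEF hEFd hEFn hFne
            exact hP4 z' z v z₂ hadj.symm hvz.symm hvz₂
              (fun h => hnz' h.symm) (hEFn z' hz'E z₂ hz₂F) (hEFn z hzE z₂ hz₂F)
          rcases mem_union.mp (hDU ▸ hzS') with hz1 | hz2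
          · exact key D₁ D₂ hDU hDd hnoedge hD₂ne hz1
          · exact key D₂ D₁ (by rw [Finset.union_comm]; exact hDU) hDd.symm hnoedge' hD₁ne hz2
      refine ⟨{v}, S', by rw [← Finset.insert_eq, hinsert], by simp [hvS'],
        ⟨v, mem_singleton_self v⟩, Finset.card_pos.mp (by omega), ?_⟩
      intro a ha b hb
      rw [mem_singleton] at ha; subst ha
      exact huniv b hb

end Seinsche
section Cone

variable {V : Type} [Fintype V] [DecidableEq V]

/-- Coning a complex (all of whose faces avoid `x`) over `x` preserves vertex
decomposability. -/
lemma vd_cone {x : V} : ∀ {Γ : Set (Finset V)}, VD Γ → (∀ H ∈ Γ, x ∉ H) →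
    VD {H : Finset V | H.erase x ∈ Γ} := by
  intro Γ hΓ
  induction hΓ with
  | simplex s =>
      intro hx
      have hxs : x ∉ s := hx s (by exact fun t ht => ht)
      have : {H : Finset V | H.erase x ∈ {t | t ⊆ s}} = {t | t ⊆ insert x s} := by
        ext H
        simp only [Set.mem_setOf_eq]
        constructor
        · intro h u hu
          by_cases hux : u = x
          · exact hux ▸ mem_insert_self _ _
          · exact mem_insert_of_mem (h (Finset.mem_erase.mpr ⟨hux, hu⟩))
        · intro h u hu
          obtain ⟨hux, huH⟩ := Finset.mem_erase.mp hu
          rcases mem_insert.mp (h huH) with h1 | h1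
          · exact absurd h1 hux
          · exact h1
      rw [this]
      exact VD.simplex _
  | void =>
      intro _
      have : {H : Finset V | H.erase x ∈ (∅ : Set (Finset V))} = ∅ := by
        ext H; simp
      rw [this]
      exact VD.void
  | step Δ y hy hshed hlink hdel ihlink ihdel =>
      intro hx
      have hxy : x ≠ y := by
        intro h
        exact hx {y} hy (h ▸ mem_singleton_self y)
      have hyx : y ≠ x := fun h => hxy h.symm
      have hymem : ∀ H : Finset V, (y ∉ H.erase x ↔ y ∉ H) := by
        intro H
        simp [Finset.mem_erase, hyx]
      have Edel : delC {H : Finset V | H.erase x ∈ Δ} y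
          = {H : Finset V | H.erase x ∈ delC Δ y} := by
        ext H
        simp only [delC, Set.mem_setOf_eq]
        rw [hymem H]
      have Elink : linkC {H : Finset V | H.erase x ∈ Δ} y
          = {H : Finset V | H.erase x ∈ linkC Δ y} := by
        ext H
        simp only [linkC, Set.mem_setOf_eq]
        rw [hymem H, Finset.erase_insert_of_ne hyx]
      refine VD.step _ y ?_ ?_ ?_ ?_
      · show ({y} : Finset V).erase x ∈ Δ
        rw [Finset.erase_eq_of_notMem (by simpa using fun h : x = y => hxy h)]
        exact hy
      · -- shedding
        intro F hF
        have hFdel : F ∈ delC {H : Finset V | H.erase x ∈ Δ} y := hF.1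
        have hxF : x ∈ F := by
          by_contra hxF
          have hins : insert x F ∈ delC {H : Finset V | H.erase x ∈ Δ} y := by
            refine ⟨?_, ?_⟩
            · show (insert x F).erase x ∈ Δ
              rw [Finset.erase_insert hxF]
              have := hFdel.1
              simp only [Set.mem_setOf_eq] at this
              rwa [Finset.erase_eq_of_notMem hxF] at this
            · simp only [Finset.mem_insert]
              push_neg
              exact ⟨fun h => hxy h.symm, hFdel.2⟩
          have := hF.2 _ hins (Finset.subset_insert _ _)
          exact hxF (this ▸ mem_insert_self x F)
        set F₀ := F.erase x with hF₀
        have hF₀mem : F₀ ∈ delC Δ y := by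
          refine ⟨hFdel.1, ?_⟩
          rw [hymem F]
          exact hFdel.2
        have hF₀facet : IsFacet (delC Δ y) F₀ := by
          refine ⟨hF₀mem, ?_⟩
          intro H hH hFH
          have hxH : x ∉ H := hx H hH.1
          have hins : insert x H ∈ delC {H : Finset V | H.erase x ∈ Δ} y := by
            refine ⟨?_, ?_⟩
            · show (insert x H).erase x ∈ Δ
              rw [Finset.erase_insert hxH]
              exact hH.1
            · simp only [Finset.mem_insert]
              push_neg
              exact ⟨fun h => hxy h.symm, hH.2⟩
          have hsub : F ⊆ insert x H := by
            intro u hu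
            by_cases hux : u = x
            · exact hux ▸ mem_insert_self _ _
            · exact mem_insert_of_mem (hFH (Finset.mem_erase.mpr ⟨hux, hu⟩))
          have heq := hF.2 _ hins hsub
          show F.erase x = H
          rw [heq, Finset.erase_insert hxH]
        have hfacetΔ := hshed F₀ hF₀facet
        refine ⟨?_, ?_⟩
        · show F.erase x ∈ Δ
          exact hfacetΔ.1
        · intro H hH hFH
          have hE : F₀ ⊆ H.erase x := fun u hu =>
            Finset.mem_erase.mpr ⟨(Finset.mem_erase.mp hu).1, hFH (Finset.mem_erase.mp hu).2⟩
          have := hfacetΔ.2 (H.erase x) hH hE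
          apply Finset.Subset.antisymm hFH
          intro u hu
          by_cases hux : u = x
          · exact hux ▸ hxF
          · have : u ∈ H.erase x := Finset.mem_erase.mpr ⟨hux, hu⟩
            rw [← hfacetΔ.2 (H.erase x) hH hE] at this
            exact (Finset.mem_erase.mp this).2
      · rw [Elink]
        exact ihlink (fun H hH => hx H hH.1)
      · rw [Edel]
        exact ihdel (fun H hH => hx H hH.1)

end Cone
section SigmaCLemmas

variable {V : Type} [Fintype V] [DecidableEq V] {G : SimpleGraph V}

lemma sigmaC_of_supp_empty {U A : Finset V} {s : ℕ} (h : Supp G U A s = ∅) :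
    SigmaC G U A s = ∅ := by
  ext H
  simp only [SigmaC, Set.mem_setOf_eq, Set.mem_empty_iff_false, iff_false]
  rintro ⟨F, hF, -⟩
  rw [h] at hF
  exact hF

lemma sigmaC_of_supp_singleton {U A : Finset V} {s : ℕ} {F₀ : Finset V}
    (h : Supp G U A s = {F₀}) : SigmaC G U A s = {t | t ⊆ (U \ F₀) \ A} := by
  ext H
  simp only [SigmaC, Set.mem_setOf_eq]
  constructor
  · rintro ⟨F, hF, hsub⟩
    rw [h, Set.mem_singleton_iff] at hF
    exact hF ▸ hsub
  · intro hsub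
    exact ⟨F₀, h ▸ rfl, hsub⟩

lemma supp_insert_of_erase {U A : Finset V} {s : ℕ} {x : V} (hx : x ∈ U) (hxA : x ∉ A)
    (hs : 1 ≤ s) {F' : Finset V} (hF' : F' ∈ Supp G (U.erase x) (insert x A) (s - 1)) :
    insert x F' ∈ Supp G U A s := by
  obtain ⟨hsub, hcard, hdisj, hconn⟩ := hF'
  have hxF' : x ∉ F' := by
    intro h
    have : x ∈ F' ∩ insert x A := Finset.mem_inter.mpr ⟨h, mem_insert_self _ _⟩
    rw [hdisj] at this
    exact absurd this (Finset.notMem_empty x)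
  refine ⟨?_, ?_, ?_, ?_⟩
  · intro u hu
    rcases mem_insert.mp hu with rfl | hu
    · exact hx
    · exact (Finset.erase_subset _ _) (hsub hu)
  · rw [Finset.card_insert_of_notMem hxF', hcard]; omega
  · ext u
    simp only [Finset.mem_inter, Finset.mem_insert, Finset.notMem_empty, iff_false]
    rintro ⟨h1 | h1, h2⟩
    · subst h1; exact hxA h2
    · have : u ∈ F' ∩ insert x A := Finset.mem_inter.mpr ⟨h1, mem_insert_of_mem h2⟩
      rw [hdisj] at this
      exact absurd this (Finset.notMem_empty u)
  · have : insert x F' ∪ A = F' ∪ insert x A := by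
      ext u
      simp only [Finset.mem_union, Finset.mem_insert]
      tauto
    rw [this]
    exact hconn

lemma supp_erase_of_mem {U A : Finset V} {s : ℕ} {x : V} {F : Finset V}
    (hF : F ∈ Supp G U A s) (hxF : x ∈ F) :
    F.erase x ∈ Supp G (U.erase x) (insert x A) (s - 1) := by
  obtain ⟨hsub, hcard, hdisj, hconn⟩ := hF
  refine ⟨?_, ?_, ?_, ?_⟩
  · intro u hu
    exact Finset.mem_erase.mpr ⟨(Finset.mem_erase.mp hu).1, hsub (Finset.mem_erase.mp hu).2⟩
  · rw [Finset.card_erase_of_mem hxF, hcard]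
  · ext u
    simp only [Finset.mem_inter, Finset.mem_erase, Finset.mem_insert,
      Finset.notMem_empty, iff_false]
    rintro ⟨⟨hux, huF⟩, h1 | h1⟩
    · exact hux h1
    · have : u ∈ F ∩ A := Finset.mem_inter.mpr ⟨huF, h1⟩
      rw [hdisj] at this
      exact absurd this (Finset.notMem_empty u)
  · have : F.erase x ∪ insert x A = F ∪ A := by
      ext u
      simp only [Finset.mem_union, Finset.mem_erase, Finset.mem_insert]
      constructor
      · rintro (⟨h1, h2⟩ | h1 | h1)
        · exact Or.inl h2
        · exact Or.inl (h1 ▸ hxF)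
        · exact Or.inr h1
      · rintro (h1 | h1)
        · by_cases hux : u = x
          · exact Or.inr (Or.inl hux)
          · exact Or.inl ⟨hux, h1⟩
        · exact Or.inr (Or.inr h1)
    rw [this]
    exact hconn

lemma supp_mem_erase_of_not_mem {U A : Finset V} {s : ℕ} {x : V} {F : Finset V}
    (hF : F ∈ Supp G U A s) (hxF : x ∉ F) : F ∈ Supp G (U.erase x) A s := by
  obtain ⟨hsub, hcard, hdisj, hconn⟩ := hF
  exact ⟨fun u hu => Finset.mem_erase.mpr ⟨fun h => hxF (h ▸ hu), hsub hu⟩, hcard, hdisj, hconn⟩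

lemma supp_mem_of_mem_erase {U A : Finset V} {s : ℕ} {x : V} {F : Finset V}
    (hF : F ∈ Supp G (U.erase x) A s) : F ∈ Supp G U A s :=
  ⟨fun u hu => (Finset.erase_subset _ _) (hF.1 hu), hF.2.1, hF.2.2.1, hF.2.2.2⟩

lemma linkC_sigmaC {U A : Finset V} {s : ℕ} {x : V} (hx : x ∈ U) (hxA : x ∉ A) :
    linkC (SigmaC G U A s) x = SigmaC G (U.erase x) A s := by
  ext H
  simp only [linkC, SigmaC, Set.mem_setOf_eq]
  constructor
  · rintro ⟨-, hxH, F, hF, hsub⟩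
    have hxF : x ∉ F := by
      intro h
      have := hsub (mem_insert_self x H)
      rw [Finset.mem_sdiff, Finset.mem_sdiff] at this
      exact this.1.2 h
    refine ⟨F, supp_mem_erase_of_not_mem hF hxF, ?_⟩
    intro u hu
    have := hsub (mem_insert_of_mem hu)
    rw [Finset.mem_sdiff, Finset.mem_sdiff] at this ⊢
    refine ⟨⟨Finset.mem_erase.mpr ⟨fun h => hxH (h ▸ hu), this.1.1⟩, this.1.2⟩, this.2⟩
  · rintro ⟨F, hF, hsub⟩
    have hxH : x ∉ H := by
      intro h
      have := hsub h
      rw [Finset.mem_sdiff, Finset.mem_sdiff, Finset.mem_erase] at this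
      exact this.1.1.1 rfl
    have hxF : x ∉ F := by
      intro h
      exact Finset.notMem_erase x U (hF.1 h)
    have hins : insert x H ⊆ (U \ F) \ A := by
      intro u hu
      rw [Finset.mem_sdiff, Finset.mem_sdiff]
      rcases mem_insert.mp hu with rfl | hu
      · exact ⟨⟨hx, hxF⟩, hxA⟩
      · have := hsub hu
        rw [Finset.mem_sdiff, Finset.mem_sdiff, Finset.mem_erase] at this
        exact ⟨⟨this.1.1.2, this.1.2⟩, this.2⟩
    refine ⟨⟨F, supp_mem_of_mem_erase hF, fun u hu => hins (mem_insert_of_mem hu)⟩,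
      hxH, F, supp_mem_of_mem_erase hF, hins⟩

/-- The key face identity. -/
lemma face_erase_eq {U A : Finset V} {x : V} {F' : Finset V} :
    ((U.erase x) \ F') \ (insert x A) = (U \ insert x F') \ A := by
  ext u
  simp only [Finset.mem_sdiff, Finset.mem_erase, Finset.mem_insert]
  tauto

lemma delC_sigmaC {U A : Finset V} {s : ℕ} {x : V} (hx : x ∈ U) (hxA : x ∉ A) (hs : 1 ≤ s)
    (Sx : ∀ F ∈ Supp G U A s, x ∉ F →
      ∃ F' ∈ Supp G (U.erase x) (insert x A) (s - 1), F' ⊆ F) :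
    delC (SigmaC G U A s) x = SigmaC G (U.erase x) (insert x A) (s - 1) := by
  ext H
  simp only [delC, SigmaC, Set.mem_setOf_eq]
  constructor
  · rintro ⟨⟨F, hF, hsub⟩, hxH⟩
    by_cases hxF : x ∈ F
    · refine ⟨F.erase x, supp_erase_of_mem hF hxF, ?_⟩
      rw [face_erase_eq, Finset.insert_erase hxF]
      exact hsub
    · obtain ⟨F', hF', hF'sub⟩ := Sx F hF hxF
      refine ⟨F', hF', ?_⟩
      intro u hu
      have := hsub hu
      rw [Finset.mem_sdiff, Finset.mem_sdiff] at this
      rw [face_erase_eq, Finset.mem_sdiff, Finset.mem_sdiff]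
      refine ⟨⟨this.1.1, ?_⟩, this.2⟩
      intro h
      rcases mem_insert.mp h with rfl | h
      · exact hxH hu
      · exact this.1.2 (hF'sub h)
  · rintro ⟨F', hF', hsub⟩
    rw [face_erase_eq] at hsub
    have hxH : x ∉ H := by
      intro h
      have := hsub h
      rw [Finset.mem_sdiff, Finset.mem_sdiff] at this
      exact this.1.2 (mem_insert_self _ _)
    exact ⟨⟨insert x F', supp_insert_of_erase hx hxA hs hF', hsub⟩, hxH⟩

lemma shedding_sigmaC {U A : Finset V} {s : ℕ} {x : V} (hx : x ∈ U) (hxA : x ∉ A)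
    (hs : 1 ≤ s)
    (Sx : ∀ F ∈ Supp G U A s, x ∉ F →
      ∃ F' ∈ Supp G (U.erase x) (insert x A) (s - 1), F' ⊆ F) :
    IsShedding (SigmaC G U A s) x := by
  intro F hF
  have hdel := delC_sigmaC (G := G) hx hxA hs Sx
  rw [hdel] at hF
  obtain ⟨F', hF', hsub⟩ := hF.1
  have hM'mem : ((U.erase x) \ F') \ (insert x A) ∈ SigmaC G (U.erase x) (insert x A) (s-1) :=
    ⟨F', hF', Finset.Subset.refl _⟩
  have hFeq : F = ((U.erase x) \ F') \ (insert x A) := hF.2 _ hM'mem hsub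
  subst hFeq
  have hSuppx : insert x F' ∈ Supp G U A s := supp_insert_of_erase hx hxA hs hF'
  have hcard : (insert x F').card = s := hSuppx.2.1
  constructor
  · exact ⟨insert x F', hSuppx, by rw [face_erase_eq]⟩
  · intro H hH hsub2
    obtain ⟨F₂, hF₂, hsub3⟩ := hH
    have hF₂sub : F₂ ⊆ insert x F' := by
      intro u hu
      have huU : u ∈ U := hF₂.1 hu
      have huA : u ∉ A := by
        intro h
        have : u ∈ F₂ ∩ A := Finset.mem_inter.mpr ⟨hu, h⟩
        rw [hF₂.2.2.1] at this
        exact absurd this (Finset.notMem_empty u)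
      by_contra hnot
      have humem : u ∈ ((U.erase x) \ F') \ (insert x A) := by
        rw [face_erase_eq, Finset.mem_sdiff, Finset.mem_sdiff]
        exact ⟨⟨huU, hnot⟩, huA⟩
      have := hsub3 (hsub2 humem)
      rw [Finset.mem_sdiff, Finset.mem_sdiff] at this
      exact this.1.2 hu
    have hF₂eq : F₂ = insert x F' := Finset.eq_of_subset_of_card_le hF₂sub
      (by rw [hcard, hF₂.2.1])
    apply Finset.Subset.antisymm hsub2
    intro u hu
    have := hsub3 hu
    rw [hF₂eq] at this
    rw [face_erase_eq]
    exact this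

end SigmaCLemmas
section MainLemmas

variable {V : Type} [Fintype V] [DecidableEq V] {G : SimpleGraph V}

lemma sigmaC_cone {U A : Finset V} {s : ℕ} {x : V} (hx : x ∈ U) (hxA : x ∉ A)
    (h : ∀ F ∈ Supp G U A s, x ∉ F) :
    SigmaC G U A s = {H : Finset V | H.erase x ∈ SigmaC G (U.erase x) A s} := by
  ext H
  simp only [SigmaC, Set.mem_setOf_eq]
  constructor
  · rintro ⟨F, hF, hsub⟩
    refine ⟨F, supp_mem_erase_of_not_mem hF (h F hF), ?_⟩
    intro u hu
    obtain ⟨hux, huH⟩ := Finset.mem_erase.mp hu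
    have := hsub huH
    rw [Finset.mem_sdiff, Finset.mem_sdiff] at this ⊢
    exact ⟨⟨Finset.mem_erase.mpr ⟨hux, this.1.1⟩, this.1.2⟩, this.2⟩
  · rintro ⟨F, hF, hsub⟩
    refine ⟨F, supp_mem_of_mem_erase hF, ?_⟩
    intro u hu
    rw [Finset.mem_sdiff, Finset.mem_sdiff]
    by_cases hux : u = x
    · subst hux
      exact ⟨⟨hx, h F (supp_mem_of_mem_erase hF)⟩, hxA⟩
    · have := hsub (Finset.mem_erase.mpr ⟨hux, hu⟩)
      rw [Finset.mem_sdiff, Finset.mem_sdiff, Finset.mem_erase] at this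
      exact ⟨⟨this.1.1.2, this.1.2⟩, this.2⟩

lemma sigmaC_allmem {U A : Finset V} {s : ℕ} {x : V} (hx : x ∈ U) (hxA : x ∉ A)
    (hs : 1 ≤ s) (h : ∀ F ∈ Supp G U A s, x ∈ F) :
    SigmaC G U A s = SigmaC G (U.erase x) (insert x A) (s - 1) := by
  ext H
  simp only [SigmaC, Set.mem_setOf_eq]
  constructor
  · rintro ⟨F, hF, hsub⟩
    refine ⟨F.erase x, supp_erase_of_mem hF (h F hF), ?_⟩
    rw [face_erase_eq, Finset.insert_erase (h F hF)]
    exact hsub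
  · rintro ⟨F', hF', hsub⟩
    refine ⟨insert x F', supp_insert_of_erase hx hxA hs hF', ?_⟩
    rw [face_erase_eq] at hsub
    exact hsub

/-- **Lemma R**: for a P4-free graph and a nonempty "contracted" set `A`, the relative
complex is always vertex decomposable. -/
lemma vd_sigmaC_of_nonempty (hP4 : P4Free G) :
    ∀ n (U A : Finset V) (s : ℕ), U.card = n → Disjoint U A → A.Nonempty →
    VD (SigmaC G U A s) := by
  intro n
  induction n using Nat.strong_induction_on with
  | _ n ih =>
  rintro U A s rfl hUA hAne
  classical
  by_cases hsupp : Supp G U A s = ∅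
  · rw [sigmaC_of_supp_empty hsupp]; exact VD.void
  obtain ⟨F₀, hF₀⟩ := Set.nonempty_iff_ne_empty.mpr hsupp
  by_cases hs0 : s = 0
  · subst hs0
    have hSupp1 : Supp G U A 0 = {F₀} := by
      ext F
      simp only [Set.mem_singleton_iff]
      constructor
      · intro hF
        rw [Finset.card_eq_zero.mp hF.2.1, Finset.card_eq_zero.mp hF₀.2.1]
      · rintro rfl; exact hF₀
    rw [sigmaC_of_supp_singleton hSupp1]
    exact VD.simplex _
  have hs : 1 ≤ s := by omega
  by_cases hcone : ∃ x ∈ U, ∀ F ∈ Supp G U A s, x ∉ F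
  · obtain ⟨x, hxU, hxall⟩ := hcone
    have hxA : x ∉ A := Finset.disjoint_left.mp hUA hxU
    rw [sigmaC_cone hxU hxA hxall]
    refine vd_cone ?_ ?_
    · exact ih (U.erase x).card (Finset.card_erase_lt_of_mem hxU) _ A s rfl
        (Finset.disjoint_of_subset_left (Finset.erase_subset _ _) hUA) hAne
    · rintro H ⟨F, hF, hsub⟩ hxH
      have := hsub hxH
      rw [Finset.mem_sdiff, Finset.mem_sdiff] at this
      exact (Finset.mem_erase.mp this.1.1).1 rfl
  by_cases hall : ∃ x ∈ U, ∀ F ∈ Supp G U A s, x ∈ F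
  · obtain ⟨x, hxU, hxall⟩ := hall
    have hxA : x ∉ A := Finset.disjoint_left.mp hUA hxU
    rw [sigmaC_allmem hxU hxA hs hxall]
    refine ih (U.erase x).card (Finset.card_erase_lt_of_mem hxU) _ (insert x A) (s - 1) rfl ?_
      (Finset.insert_nonempty _ _)
    rw [Finset.disjoint_insert_right]
    exact ⟨Finset.notMem_erase _ _,
      Finset.disjoint_of_subset_left (Finset.erase_subset _ _) hUA⟩
  push_neg at hcone hall
  obtain ⟨a₀, ha₀⟩ := hAne
  obtain ⟨u₀, hu₀F⟩ := Finset.card_pos.mp (by rw [hF₀.2.1]; omega : 0 < F₀.card)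
  have hu₀U : u₀ ∈ U := hF₀.1 hu₀F
  -- T = U ∪ A is connected
  have hkey : ∀ u ∈ U ∪ A, ReachIn G (U ∪ A) u a₀ := by
    intro u hu
    have main : ∀ F ∈ Supp G U A s, ∀ u ∈ F ∪ A, ReachIn G (U ∪ A) u a₀ := by
      intro F hF u hu
      have hconn := hF.2.2.2
      rw [connOn_iff] at hconn
      refine reachIn_mono ?_ (hconn.2 u hu a₀ (mem_union_right _ ha₀))
      exact Finset.union_subset_union hF.1 (Finset.Subset.refl A)
    rcases mem_union.mp hu with hu | hu
    · obtain ⟨F, hF, huF⟩ := hcone u hu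
      exact main F hF u (mem_union_left _ huF)
    · exact main F₀ hF₀ u (mem_union_right _ hu)
  have hTconn : ConnOn G (U ∪ A) := by
    rw [connOn_iff]
    refine ⟨⟨a₀, mem_union_right _ ha₀⟩, ?_⟩
    intro a ha b hb
    exact (hkey a ha).trans (reachIn_symm (hkey b hb))
  have hT2 : 2 ≤ (U ∪ A).card := by
    have hsub : ({u₀, a₀} : Finset V) ⊆ U ∪ A := by
      intro u hu
      rcases mem_insert.mp hu with rfl | hu
      · exact mem_union_left _ hu₀U
      · exact mem_union_right _ (mem_singleton.mp hu ▸ ha₀)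
    have : ({u₀, a₀} : Finset V).card = 2 := by
      rw [Finset.card_insert_of_notMem (by
        rw [mem_singleton]; intro h; exact Finset.disjoint_left.mp hUA hu₀U (h ▸ ha₀)),
        Finset.card_singleton]
    rw [← this]
    exact Finset.card_le_card hsub
  obtain ⟨T₁, T₂, hTU, hTd, hT₁ne, hT₂ne, hTadj⟩ := seinsche_aux hP4 _ _ rfl hT2 hTconn
  suffices hmain2 : ∃ x ∈ U, (∃ p ∈ insert x A, p ∈ T₁) ∧ (∃ q ∈ insert x A, q ∈ T₂) by
    obtain ⟨x, hxU, hp, hq⟩ := hmain2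
    have hxA : x ∉ A := Finset.disjoint_left.mp hUA hxU
    have hSx : ∀ F ∈ Supp G U A s, x ∉ F →
        ∃ F' ∈ Supp G (U.erase x) (insert x A) (s - 1), F' ⊆ F := by
      intro F hF hxF
      obtain ⟨v, hvF⟩ := Finset.card_pos.mp (by rw [hF.2.1]; omega : 0 < F.card)
      refine ⟨F.erase v, ?_, Finset.erase_subset _ _⟩
      refine ⟨?_, ?_, ?_, ?_⟩
      · intro u hu
        exact Finset.mem_erase.mpr ⟨fun h => hxF (h ▸ (Finset.mem_erase.mp hu).2),
          hF.1 (Finset.mem_erase.mp hu).2⟩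
      · rw [Finset.card_erase_of_mem hvF, hF.2.1]
      · ext u
        simp only [Finset.mem_inter, Finset.mem_erase, Finset.mem_insert,
          Finset.notMem_empty, iff_false]
        rintro ⟨⟨huv, huF⟩, h1 | h1⟩
        · exact hxF (h1 ▸ huF)
        · have : u ∈ F ∩ A := Finset.mem_inter.mpr ⟨huF, h1⟩
          rw [hF.2.2.1] at this
          exact absurd this (Finset.notMem_empty u)
      · obtain ⟨p, hpA, hpT⟩ := hp
        obtain ⟨q, hqA, hqT⟩ := hq
        refine connOn_of_mixed hTadj ?_ ⟨p, mem_union_right _ hpA, hpT⟩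
          ⟨q, mem_union_right _ hqA, hqT⟩
        rw [hTU]
        intro u hu
        rcases mem_union.mp hu with hu | hu
        · exact mem_union_left _ (hF.1 (Finset.erase_subset _ _ hu))
        · rcases mem_insert.mp hu with rfl | hu
          · exact mem_union_left _ hxU
          · exact mem_union_right _ hu
    obtain ⟨Fx, hFx, hxFx⟩ := hall x hxU
    refine VD.step _ x ?_ (shedding_sigmaC hxU hxA hs hSx) ?_ ?_
    · exact ⟨Fx, hFx, by
        rw [Finset.singleton_subset_iff, Finset.mem_sdiff, Finset.mem_sdiff]
        exact ⟨⟨hxU, hxFx⟩, hxA⟩⟩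
    · rw [linkC_sigmaC hxU hxA]
      exact ih (U.erase x).card (Finset.card_erase_lt_of_mem hxU) _ A s rfl
        (Finset.disjoint_of_subset_left (Finset.erase_subset _ _) hUA) ⟨a₀, ha₀⟩
    · rw [delC_sigmaC hxU hxA hs hSx]
      refine ih (U.erase x).card (Finset.card_erase_lt_of_mem hxU) _ (insert x A) (s - 1) rfl ?_
        (Finset.insert_nonempty _ _)
      rw [Finset.disjoint_insert_right]
      exact ⟨Finset.notMem_erase _ _,
        Finset.disjoint_of_subset_left (Finset.erase_subset _ _) hUA⟩
  -- produce the vertex x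
  by_cases hA₁ : ∃ p ∈ A, p ∈ T₁
  · by_cases hA₂ : ∃ q ∈ A, q ∈ T₂
    · obtain ⟨p, hpA, hpT⟩ := hA₁
      obtain ⟨q, hqA, hqT⟩ := hA₂
      exact ⟨u₀, hu₀U, ⟨p, mem_insert_of_mem hpA, hpT⟩, ⟨q, mem_insert_of_mem hqA, hqT⟩⟩
    · -- A ⊆ T₁, pick x ∈ T₂ ⊆ U
      push_neg at hA₂
      obtain ⟨x, hxT₂⟩ := hT₂ne
      have hxUA : x ∈ U ∪ A := hTU ▸ mem_union_right _ hxT₂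
      have hxU : x ∈ U := by
        rcases mem_union.mp hxUA with h | h
        · exact h
        · exact absurd hxT₂ (hA₂ x h)
      have ha₀T : a₀ ∈ T₁ := by
        have : a₀ ∈ T₁ ∪ T₂ := hTU ▸ mem_union_right _ ha₀
        rcases mem_union.mp this with h | h
        · exact h
        · exact absurd h (hA₂ a₀ ha₀)
      exact ⟨x, hxU, ⟨a₀, mem_insert_of_mem ha₀, ha₀T⟩, ⟨x, mem_insert_self _ _, hxT₂⟩⟩
  · -- A ⊆ T₂, pick x ∈ T₁ ⊆ U
    push_neg at hA₁
    obtain ⟨x, hxT₁⟩ := hT₁ne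
    have hxUA : x ∈ U ∪ A := hTU ▸ mem_union_left _ hxT₁
    have hxU : x ∈ U := by
      rcases mem_union.mp hxUA with h | h
      · exact h
      · exact absurd hxT₁ (hA₁ x h)
    have ha₀T : a₀ ∈ T₂ := by
      have : a₀ ∈ T₁ ∪ T₂ := hTU ▸ mem_union_right _ ha₀
      rcases mem_union.mp this with h | h
      · exact absurd h (hA₁ a₀ ha₀)
      · exact h
    exact ⟨x, hxU, ⟨x, mem_insert_self _ _, hxT₁⟩, ⟨a₀, mem_insert_of_mem ha₀, ha₀T⟩⟩

end MainLemmas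
section GapFree

variable {V : Type} [Fintype V] [DecidableEq V] {G : SimpleGraph V}

/-- The relative version of `RGapFree` on a ground set `U`. -/
def GapFreeOn (G : SimpleGraph V) (U : Finset V) (r : ℕ) : Prop :=
  ¬ ∃ E₁ E₂ : Finset V, E₁ ∈ ConR G U r ∧ E₂ ∈ ConR G U r ∧ Disjoint E₁ E₂ ∧
      ∀ W ∈ ConR G U r, W ⊆ E₁ ∪ E₂ → W = E₁ ∨ W = E₂

lemma conR_mono {U T : Finset V} {r : ℕ} (h : T ⊆ U) {W : Finset V}
    (hW : W ∈ ConR G T r) : W ∈ ConR G U r :=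
  ⟨hW.1.trans h, hW.2.1, hW.2.2⟩

lemma gapFreeOn_mono {U T : Finset V} {r : ℕ} (h : T ⊆ U) (hgap : GapFreeOn G U r) :
    GapFreeOn G T r := by
  rintro ⟨E₁, E₂, hE₁, hE₂, hd, honly⟩
  refine hgap ⟨E₁, E₂, conR_mono h hE₁, conR_mono h hE₂, hd, ?_⟩
  intro W hW hWsub
  have hWT : W ⊆ T := hWsub.trans (Finset.union_subset hE₁.1 hE₂.1)
  exact honly W ⟨hWT, hW.2.1, hW.2.2⟩ hWsub

/-- `x` is a good vertex for the ground set `U`. -/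
def GoodV (G : SimpleGraph V) (U : Finset V) (r : ℕ) (x : V) : Prop :=
  ∀ F ∈ ConR G U r, x ∉ F → ∃ v ∈ F, ConnOn G (insert x (F.erase v))

lemma exists_goodV (hP4 : P4Free G) {r : ℕ} (hr : 2 ≤ r) :
    ∀ n (U : Finset V), U.card = n → U.Nonempty → GapFreeOn G U r →
    ∃ x ∈ U, GoodV G U r x := by
  intro n
  induction n using Nat.strong_induction_on with
  | _ n ih =>
  rintro U rfl hUne hgap
  classical
  by_cases hC : ConR G U r = ∅
  · obtain ⟨x, hx⟩ := hUne
    refine ⟨x, hx, ?_⟩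
    intro F hF
    rw [hC] at hF
    exact absurd hF (Set.notMem_empty F)
  obtain ⟨F₀, hF₀⟩ := Set.nonempty_iff_ne_empty.mpr hC
  obtain ⟨w₀, hw₀⟩ := Finset.card_pos.mp (by rw [hF₀.2.1]; omega : 0 < F₀.card)
  have hw₀U : w₀ ∈ U := hF₀.1 hw₀
  set C := U.filter (fun u => ReachIn G U w₀ u) with hCdef
  have hCU : C ⊆ U := Finset.filter_subset _ _
  have hmemC : ∀ u, u ∈ C ↔ u ∈ U ∧ ReachIn G U w₀ u := by
    intro u; simp [hCdef]
  have hreachW : ∀ W ∈ ConR G U r, ∀ a ∈ W, ∀ b ∈ W, ReachIn G U a b := by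
    intro W hW a ha b hb
    have := hW.2.2
    rw [connOn_iff] at this
    exact reachIn_mono hW.1 (this.2 a ha b hb)
  have hF₀C : F₀ ⊆ C := by
    intro u hu
    exact (hmemC u).mpr ⟨hF₀.1 hu, hreachW F₀ hF₀ w₀ hw₀ u hu⟩
  have hsubC : ∀ W ∈ ConR G U r, ∀ p ∈ W, p ∈ C → W ⊆ C := by
    intro W hW p hp hpC u hu
    exact (hmemC u).mpr ⟨hW.1 hu,
      ((hmemC p).mp hpC).2.trans (hreachW W hW p hp u hu)⟩
  have hallC : ∀ W ∈ ConR G U r, W ⊆ C := by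
    intro W hW
    by_cases hcap : ∃ p ∈ W, p ∈ C
    · obtain ⟨p, hp, hpC⟩ := hcap
      exact hsubC W hW p hp hpC
    · exfalso
      push_neg at hcap
      have hdisj : Disjoint W F₀ := by
        rw [Finset.disjoint_left]
        intro u hu huF₀
        exact hcap u hu (hF₀C huF₀)
      rw [GapFreeOn] at hgap
      push_neg at hgap
      obtain ⟨W', hW', hW'sub, hW'ne⟩ := hgap W F₀ hW hF₀ hdisj
      obtain ⟨q, hqW', hqF₀⟩ : ∃ q ∈ W', q ∈ F₀ := by
        by_contra hq
        push_neg at hq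
        have : W' ⊆ W := by
          intro u hu
          rcases mem_union.mp (hW'sub hu) with h | h
          · exact h
          · exact absurd h (hq u hu)
        exact hW'ne.1 (Finset.eq_of_subset_of_card_le this (by rw [hW.2.1, hW'.2.1]))
      obtain ⟨p, hpW', hpF₀⟩ : ∃ p ∈ W', p ∉ F₀ := by
        by_contra hp
        push_neg at hp
        exact hW'ne.2 (Finset.eq_of_subset_of_card_le hp (by rw [hF₀.2.1, hW'.2.1]))
      have hpW : p ∈ W := by
        rcases mem_union.mp (hW'sub hpW') with h | h
        · exact h
        · exact absurd h hpF₀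
      exact hcap p hpW (hsubC W' hW' q hqW' (hF₀C hqF₀) hpW')
  by_cases hCeq : C = U
  · -- U is connected : apply Seinsche and recurse into T₂
    have hUconn : ConnOn G U := by
      rw [connOn_iff]
      refine ⟨hUne, ?_⟩
      intro a ha b hb
      have hra : ReachIn G U w₀ a := ((hmemC a).mp (hCeq ▸ ha)).2
      have hrb : ReachIn G U w₀ b := ((hmemC b).mp (hCeq ▸ hb)).2
      exact (reachIn_symm hra).trans hrb
    have hU2 : 2 ≤ U.card := by
      have := Finset.card_le_card hF₀.1
      rw [hF₀.2.1] at this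
      omega
    obtain ⟨T₁, T₂, hTU, hTd, hT₁ne, hT₂ne, hTadj⟩ := seinsche_aux hP4 _ _ rfl hU2 hUconn
    have hT₂U : T₂ ⊆ U := hTU ▸ Finset.subset_union_right
    have hT₂lt : T₂.card < U.card := by
      rw [← hTU, Finset.card_union_of_disjoint hTd]
      have := Finset.card_pos.mpr hT₁ne
      omega
    obtain ⟨x, hxT₂, hxgood⟩ := ih T₂.card hT₂lt T₂ rfl hT₂ne (gapFreeOn_mono hT₂U hgap)
    refine ⟨x, hT₂U hxT₂, ?_⟩
    intro F hF hxF
    by_cases hFT₁ : ∃ p ∈ F, p ∈ T₁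
    · obtain ⟨p, hpF, hpT₁⟩ := hFT₁
      by_cases hFT₂ : ∃ q ∈ F, q ∈ T₂
      · obtain ⟨q, hqF, hqT₂⟩ := hFT₂
        refine ⟨q, hqF, ?_⟩
        refine connOn_of_mixed hTadj ?_ ⟨p, ?_, hpT₁⟩ ⟨x, mem_insert_self _ _, hxT₂⟩
        · rw [hTU]
          intro u hu
          rcases mem_insert.mp hu with rfl | hu
          · exact hT₂U hxT₂
          · exact hF.1 (Finset.erase_subset _ _ hu)
        · refine mem_insert_of_mem (Finset.mem_erase.mpr ⟨?_, hpF⟩)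
          intro h
          exact Finset.disjoint_left.mp hTd hpT₁ (h ▸ hqT₂)
      · -- F ⊆ T₁
        push_neg at hFT₂
        obtain ⟨v, hvF⟩ := Finset.card_pos.mp (by rw [hF.2.1]; omega : 0 < F.card)
        refine ⟨v, hvF, ?_⟩
        obtain ⟨p₂, hp₂⟩ := Finset.card_pos.mp
          (by rw [Finset.card_erase_of_mem hvF, hF.2.1]; omega : 0 < (F.erase v).card)
        have hp₂T₁ : p₂ ∈ T₁ := by
          have hp₂F : p₂ ∈ F := Finset.erase_subset _ _ hp₂
          have : p₂ ∈ T₁ ∪ T₂ := hTU ▸ hF.1 hp₂F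
          rcases mem_union.mp this with h | h
          · exact h
          · exact absurd h (hFT₂ p₂ hp₂F)
        refine connOn_of_mixed hTadj ?_ ⟨p₂, mem_insert_of_mem hp₂, hp₂T₁⟩
          ⟨x, mem_insert_self _ _, hxT₂⟩
        rw [hTU]
        intro u hu
        rcases mem_insert.mp hu with rfl | hu
        · exact hT₂U hxT₂
        · exact hF.1 (Finset.erase_subset _ _ hu)
    · -- F ⊆ T₂
      push_neg at hFT₁
      have hFsub : F ⊆ T₂ := by
        intro u hu
        have : u ∈ T₁ ∪ T₂ := hTU ▸ hF.1 hu
        rcases mem_union.mp this with h | h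
        · exact absurd h (hFT₁ u hu)
        · exact h
      exact hxgood F ⟨hFsub, hF.2.1, hF.2.2⟩ hxF
  · -- C ⊊ U : recurse into C
    have hClt : C.card < U.card := by
      refine Finset.card_lt_card ?_
      rw [Finset.ssubset_iff_subset_ne]
      exact ⟨hCU, hCeq⟩
    have hCne : C.Nonempty := ⟨w₀, (hmemC w₀).mpr ⟨hw₀U, Relation.ReflTransGen.refl⟩⟩
    obtain ⟨x, hxC, hxgood⟩ := ih C.card hClt C rfl hCne (gapFreeOn_mono hCU hgap)
    refine ⟨x, hCU hxC, ?_⟩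
    intro F hF hxF
    exact hxgood F ⟨hallC F hF, hF.2.1, hF.2.2⟩ hxF

end GapFree
section TheoremS

variable {V : Type} [Fintype V] [DecidableEq V] {G : SimpleGraph V}

lemma supp_empty_eq_conR {U : Finset V} {r : ℕ} : Supp G U ∅ r = ConR G U r := by
  ext F
  constructor
  · rintro ⟨h1, h2, h3, h4⟩
    rw [Finset.union_empty] at h4
    exact ⟨h1, h2, h4⟩
  · rintro ⟨h1, h2, h3⟩
    exact ⟨h1, h2, Finset.inter_empty F, by rwa [Finset.union_empty]⟩

lemma sigmaG_eq_sigmaC {U : Finset V} {r : ℕ} : SigmaG G U r = SigmaC G U ∅ r := by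
  ext H
  simp only [SigmaG, SigmaC, Set.mem_setOf_eq, supp_empty_eq_conR, Finset.sdiff_empty]

theorem vd_sigmaC_empty (hP4 : P4Free G) {r : ℕ} (hr : 2 ≤ r) :
    ∀ n (U : Finset V), U.card = n → GapFreeOn G U r → VD (SigmaC G U ∅ r) := by
  intro n
  induction n using Nat.strong_induction_on with
  | _ n ih =>
  rintro U rfl hgap
  classical
  by_cases hsupp : Supp G U ∅ r = ∅
  · rw [sigmaC_of_supp_empty hsupp]; exact VD.void
  obtain ⟨F₀, hF₀⟩ := Set.nonempty_iff_ne_empty.mpr hsupp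
  have hs : 1 ≤ r := by omega
  by_cases hcone : ∃ x ∈ U, ∀ F ∈ Supp G U ∅ r, x ∉ F
  · obtain ⟨x, hxU, hxall⟩ := hcone
    rw [sigmaC_cone hxU (Finset.notMem_empty x) hxall]
    refine vd_cone ?_ ?_
    · exact ih (U.erase x).card (Finset.card_erase_lt_of_mem hxU) _ rfl
        (gapFreeOn_mono (Finset.erase_subset _ _) hgap)
    · rintro H ⟨F, hF, hsub⟩ hxH
      have := hsub hxH
      rw [Finset.mem_sdiff, Finset.mem_sdiff] at this
      exact (Finset.mem_erase.mp this.1.1).1 rfl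
  by_cases hall : ∃ x ∈ U, ∀ F ∈ Supp G U ∅ r, x ∈ F
  · obtain ⟨x, hxU, hxall⟩ := hall
    rw [sigmaC_allmem hxU (Finset.notMem_empty x) hs hxall]
    exact vd_sigmaC_of_nonempty hP4 (U.erase x).card _ (insert x ∅) (r - 1) rfl
      (by rw [Finset.disjoint_insert_right]
          exact ⟨Finset.notMem_erase _ _, Finset.disjoint_empty_right _⟩)
      (Finset.insert_nonempty _ _)
  push_neg at hcone hall
  have hUne : U.Nonempty := by
    obtain ⟨u, hu⟩ := Finset.card_pos.mp (by rw [hF₀.2.1]; omega : 0 < F₀.card)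
    exact ⟨u, hF₀.1 hu⟩
  obtain ⟨x, hxU, hxgood⟩ := exists_goodV hP4 hr U.card U rfl hUne hgap
  have hxA : x ∉ (∅ : Finset V) := Finset.notMem_empty x
  have hSx : ∀ F ∈ Supp G U ∅ r, x ∉ F →
      ∃ F' ∈ Supp G (U.erase x) (insert x (∅ : Finset V)) (r - 1), F' ⊆ F := by
    intro F hF hxF
    have hFC : F ∈ ConR G U r := by rw [← supp_empty_eq_conR (G := G) (U := U) (r := r)]; exact hF
    obtain ⟨v, hvF, hconn⟩ := hxgood F hFC hxF
    refine ⟨F.erase v, ?_, Finset.erase_subset _ _⟩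
    refine ⟨?_, ?_, ?_, ?_⟩
    · intro u hu
      exact Finset.mem_erase.mpr ⟨fun h => hxF (h ▸ (Finset.mem_erase.mp hu).2),
        hF.1 (Finset.mem_erase.mp hu).2⟩
    · rw [Finset.card_erase_of_mem hvF, hF.2.1]
    · ext u
      simp only [Finset.mem_inter, Finset.mem_erase, Finset.mem_insert,
        Finset.notMem_empty, iff_false, or_false]
      rintro ⟨⟨huv, huF⟩, rfl⟩
      exact hxF huF
    · have : F.erase v ∪ insert x ∅ = insert x (F.erase v) := by
        ext u
        simp only [Finset.mem_union, Finset.mem_insert, Finset.notMem_empty, or_false]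
        tauto
      rw [this]
      exact hconn
  obtain ⟨Fx, hFx, hxFx⟩ := hall x hxU
  refine VD.step _ x ?_ (shedding_sigmaC hxU hxA hs hSx) ?_ ?_
  · exact ⟨Fx, hFx, by
      rw [Finset.singleton_subset_iff, Finset.mem_sdiff, Finset.mem_sdiff]
      exact ⟨⟨hxU, hxFx⟩, hxA⟩⟩
  · rw [linkC_sigmaC hxU hxA]
    exact ih (U.erase x).card (Finset.card_erase_lt_of_mem hxU) _ rfl
      (gapFreeOn_mono (Finset.erase_subset _ _) hgap)
  · rw [delC_sigmaC hxU hxA hs hSx]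
    exact vd_sigmaC_of_nonempty hP4 (U.erase x).card _ (insert x ∅) (r - 1) rfl
      (by rw [Finset.disjoint_insert_right]
          exact ⟨Finset.notMem_erase _ _, Finset.disjoint_empty_right _⟩)
      (Finset.insert_nonempty _ _)

end TheoremS
section Cograph

lemma joinSum_adj_ll {α β : Type} {G : SimpleGraph α} {H : SimpleGraph β} {u v : α} :
    (joinSum G H).Adj (Sum.inl u) (Sum.inl v) ↔ G.Adj u v := by
  simp only [joinSum, SimpleGraph.fromRel_adj]
  constructor
  · rintro ⟨hne, h | h⟩
    · exact h
    · exact h.symm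
  · intro h
    exact ⟨fun he => h.ne (Sum.inl.inj he), Or.inl h⟩

lemma joinSum_adj_rr {α β : Type} {G : SimpleGraph α} {H : SimpleGraph β} {u v : β} :
    (joinSum G H).Adj (Sum.inr u) (Sum.inr v) ↔ H.Adj u v := by
  simp only [joinSum, SimpleGraph.fromRel_adj]
  constructor
  · rintro ⟨hne, h | h⟩
    · exact h
    · exact h.symm
  · intro h
    exact ⟨fun he => h.ne (Sum.inr.inj he), Or.inl h⟩

lemma joinSum_adj_lr {α β : Type} {G : SimpleGraph α} {H : SimpleGraph β} {u : α} {v : β} :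
    (joinSum G H).Adj (Sum.inl u) (Sum.inr v) := by
  simp only [joinSum, SimpleGraph.fromRel_adj]
  exact ⟨by simp, Or.inl trivial⟩

lemma joinSum_adj_rl {α β : Type} {G : SimpleGraph α} {H : SimpleGraph β} {u : β} {v : α} :
    (joinSum G H).Adj (Sum.inr u) (Sum.inl v) :=
  joinSum_adj_lr.symm

lemma p4Free_sum {α β : Type} {G : SimpleGraph α} {H : SimpleGraph β}
    (hG : P4Free G) (hH : P4Free H) : P4Free (G ⊕g H) := by
  intro a b c d hab hbc hcd hac had hbd
  cases a <;> cases b <;> cases c <;> cases d <;>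
    simp only [SimpleGraph.sum_adj] at hab hbc hcd hac had hbd <;>
    first
      | exact hab
      | exact hbc
      | exact hcd
      | exact hG _ _ _ _ hab hbc hcd hac had hbd
      | exact hH _ _ _ _ hab hbc hcd hac had hbd

lemma p4Free_joinSum {α β : Type} {G : SimpleGraph α} {H : SimpleGraph β}
    (hG : P4Free G) (hH : P4Free H) : P4Free (joinSum G H) := by
  intro a b c d hab hbc hcd hac had hbd
  cases a <;> cases b <;> cases c <;> cases d <;>
    first
      | exact hac joinSum_adj_lr
      | exact hac joinSum_adj_rl
      | exact had joinSum_adj_lr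
      | exact had joinSum_adj_rl
      | exact hbd joinSum_adj_lr
      | exact hbd joinSum_adj_rl
      | exact hG _ _ _ _ (joinSum_adj_ll.mp hab) (joinSum_adj_ll.mp hbc)
          (joinSum_adj_ll.mp hcd) (fun h => hac (joinSum_adj_ll.mpr h))
          (fun h => had (joinSum_adj_ll.mpr h)) (fun h => hbd (joinSum_adj_ll.mpr h))
      | exact hH _ _ _ _ (joinSum_adj_rr.mp hab) (joinSum_adj_rr.mp hbc)
          (joinSum_adj_rr.mp hcd) (fun h => hac (joinSum_adj_rr.mpr h))
          (fun h => had (joinSum_adj_rr.mpr h)) (fun h => hbd (joinSum_adj_rr.mpr h))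

lemma p4Free_iso {α β : Type} {G : SimpleGraph α} {H : SimpleGraph β}
    (h : P4Free G) (e : G ≃g H) : P4Free H := by
  intro a b c d hab hbc hcd hac had hbd
  exact h (e.symm a) (e.symm b) (e.symm c) (e.symm d)
    (e.symm.map_adj_iff.mpr hab) (e.symm.map_adj_iff.mpr hbc) (e.symm.map_adj_iff.mpr hcd)
    (fun hg => hac (e.symm.map_adj_iff.mp hg)) (fun hg => had (e.symm.map_adj_iff.mp hg))
    (fun hg => hbd (e.symm.map_adj_iff.mp hg))

lemma p4Free_of_isCograph : ∀ {α : Type} {G : SimpleGraph α}, IsCograph G → P4Free G := by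
  intro α G h
  induction h with
  | single => intro a b c d hab _ _ _ _ _; exact hab.elim
  | disjUnion hG hH ihG ihH => exact p4Free_sum ihG ihH
  | join hG hH ihG ihH => exact p4Free_joinSum ihG ihH
  | iso hG e ih => exact p4Free_iso ih e

end Cograph

/-- If `G` is an `r`-gap-free cograph with `r ≥ 2`, then `Σ_r(G)` is
vertex decomposable. -/
theorem sigma_vd_of_cograph_rGapFree {V : Type} [Fintype V] [DecidableEq V]
    (G : SimpleGraph V) (r : ℕ) (hr : 2 ≤ r) (hcog : IsCograph G)
    (hgap : RGapFree G r) :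
    VD (SigmaG G Finset.univ r) := by
  have hP4 : P4Free G := p4Free_of_isCograph hcog
  rw [sigmaG_eq_sigmaC]
  exact vd_sigmaC_empty hP4 hr Finset.univ.card Finset.univ rfl hgap
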